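/- arXiv:2603.18653 — 5 statements merged into one kernel-verified Lean document; each statement's English description precedes it below -/
import Mathlib

section
/- For an integer budget Γ with 0 ≤ Γ ≤ n and real numbers t_1,…,t_n, the minimum of ∑_i t_i ξ_i over all ξ ∈ ℝ^n with |ξ_i| ≤ 1 for all i and ∑_i |ξ_i| ≤ Γ equals the negative of the sum of the Γ largest values among |t_1|,…,|t_n|. -/
/-!
Choose a set `S` of `Γ` indices maximizing `∑ i ∈ S, |t i|`. An exchange argument shows that
`τ := min_{i ∈ S} |t i|` separates `S` from its complement: `|t j| ≤ τ ≤ |t i|` for `i ∈ S`, `j ∉ S`.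
For feasible `ξ`, writing `∑ |t i| |ξ i| = ∑ (|t i| - τ) |ξ i| + τ ∑ |ξ i|`, the first sum is at most
`∑ i ∈ S, (|t i| - τ)` and the second at most `τ Γ`, so `∑ t i ξ i ≥ -∑ i ∈ S, |t i|`; the bound is
attained by `ξ = -sign t` on `S` and `0` off `S`.
-/

/-- Sum of the `Γ` largest values among `|t 1|, …, |t n|`:
the supremum over all subsets of cardinality `Γ` of the sum of `|t i|`. -/
noncomputable def sumTopAbs (n : ℕ) (t : Fin n → ℝ) (Γ : ℕ) : ℝ :=
  sSup {x : ℝ | ∃ S : Finset (Fin n), S.card = Γ ∧ x = ∑ i ∈ S, |t i|}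

open Finset

section SumMaximal

variable {ι : Type*}

theorem exists_card_eq_sum_maximal [Fintype ι] (a : ι → ℝ) {k : ℕ} (hk : k ≤ Fintype.card ι) :
    ∃ S : Finset ι, S.card = k ∧ ∀ T : Finset ι, T.card = k → ∑ i ∈ T, a i ≤ ∑ i ∈ S, a i := by
  obtain ⟨S, hS, hmax⟩ := (univ.powersetCard k).exists_max_image (fun S => ∑ i ∈ S, a i)
    (powersetCard_nonempty.2 (by simpa using hk))
  exact ⟨S, (mem_powersetCard.1 hS).2,
    fun T hT => hmax T (mem_powersetCard.2 ⟨subset_univ T, hT⟩)⟩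

theorem le_of_mem_of_notMem_of_sum_maximal {a : ι → ℝ} {S : Finset ι}
    (hS : ∀ T : Finset ι, T.card = S.card → ∑ i ∈ T, a i ≤ ∑ i ∈ S, a i)
    {i j : ι} (hi : i ∈ S) (hj : j ∉ S) : a j ≤ a i := by
  classical
  have hj' : j ∉ S.erase i := fun h => hj (mem_of_mem_erase h)
  have hcard : (insert j (S.erase i)).card = S.card := by
    rw [card_insert_of_notMem hj', card_erase_add_one hi]
  have hswap := hS _ hcard
  rw [sum_insert hj', ← add_sum_erase S a hi] at hswap
  linarith

theorem exists_threshold_of_sum_maximal [Fintype ι] {a : ι → ℝ} (ha : ∀ i, 0 ≤ a i)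
    {S : Finset ι} (hS : ∀ T : Finset ι, T.card = S.card → ∑ i ∈ T, a i ≤ ∑ i ∈ S, a i) :
    ∃ τ, 0 ≤ τ ∧ (∀ i ∈ S, τ ≤ a i) ∧ ∀ j ∉ S, a j ≤ τ := by
  rcases S.eq_empty_or_nonempty with rfl | hne
  · exact ⟨∑ i, a i, sum_nonneg fun i _ => ha i, by simp,
      fun j _ => single_le_sum (fun i _ => ha i) (mem_univ j)⟩
  · obtain ⟨i₀, hi₀, hmin⟩ := S.exists_min_image a hne
    exact ⟨a i₀, ha i₀, hmin, fun j hj => le_of_mem_of_notMem_of_sum_maximal hS hi₀ hj⟩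

theorem sum_mul_le_sum_of_threshold [Fintype ι] {a w : ι → ℝ} {S : Finset ι} {τ : ℝ}
    (hτ : 0 ≤ τ) (hin : ∀ i ∈ S, τ ≤ a i) (hout : ∀ j ∉ S, a j ≤ τ)
    (hw₀ : ∀ i, 0 ≤ w i) (hw₁ : ∀ i, w i ≤ 1) (hw : ∑ i, w i ≤ S.card) :
    ∑ i, a i * w i ≤ ∑ i ∈ S, a i := by
  classical
  have hshift : ∀ i, (a i - τ) * w i ≤ if i ∈ S then a i - τ else 0 := by
    intro i
    split_ifs with h
    · exact mul_le_of_le_one_right (sub_nonneg.2 (hin i h)) (hw₁ i)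
    · exact mul_nonpos_of_nonpos_of_nonneg (sub_nonpos.2 (hout i h)) (hw₀ i)
  calc ∑ i, a i * w i = ∑ i, (a i - τ) * w i + τ * ∑ i, w i := by
        rw [mul_sum, ← sum_add_distrib]
        exact sum_congr rfl fun i _ => by ring
    _ ≤ ∑ i ∈ S, (a i - τ) + τ * S.card := by
        gcongr
        exact (sum_le_sum fun i _ => hshift i).trans_eq (by rw [sum_ite_mem, univ_inter])
    _ = ∑ i ∈ S, a i := by
        rw [sum_sub_distrib, sum_const, nsmul_eq_mul]
        ring

theorem sum_mul_le_sum_of_sum_maximal [Fintype ι] {a w : ι → ℝ} (ha : ∀ i, 0 ≤ a i)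
    {S : Finset ι} (hS : ∀ T : Finset ι, T.card = S.card → ∑ i ∈ T, a i ≤ ∑ i ∈ S, a i)
    (hw₀ : ∀ i, 0 ≤ w i) (hw₁ : ∀ i, w i ≤ 1) (hw : ∑ i, w i ≤ S.card) :
    ∑ i, a i * w i ≤ ∑ i ∈ S, a i := by
  obtain ⟨τ, hτ, hin, hout⟩ := exists_threshold_of_sum_maximal ha hS
  exact sum_mul_le_sum_of_threshold hτ hin hout hw₀ hw₁ hw

theorem exists_sum_mul_eq_neg_sum_abs [Fintype ι] (S : Finset ι) (t : ι → ℝ) :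
    ∃ ξ : ι → ℝ, (∀ i, |ξ i| ≤ 1) ∧ ∑ i, |ξ i| ≤ S.card ∧
      ∑ i, t i * ξ i = -∑ i ∈ S, |t i| := by
  classical
  set ξ : ι → ℝ := fun i => if i ∈ S then -(SignType.sign (t i) : ℝ) else 0 with hξ
  have habs : ∀ i, |ξ i| ≤ if i ∈ S then 1 else 0 := by
    intro i
    by_cases hi : i ∈ S
    · rcases lt_trichotomy (t i) 0 with h | h | h <;> simp [hξ, hi, h]
    · simp [hξ, hi]
  refine ⟨ξ, fun i => (habs i).trans (by split_ifs <;> norm_num), ?_, ?_⟩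
  · exact (sum_le_sum fun i _ => habs i).trans_eq (by simp)
  · simp [hξ, mul_ite, sum_ite_mem]

end SumMaximal

theorem sumTopAbs_eq_of_sum_maximal {n Γ : ℕ} {t : Fin n → ℝ} {S : Finset (Fin n)}
    (hSΓ : S.card = Γ) (hS : ∀ T : Finset (Fin n), T.card = Γ → ∑ i ∈ T, |t i| ≤ ∑ i ∈ S, |t i|) :
    sumTopAbs n t Γ = ∑ i ∈ S, |t i| :=
  IsGreatest.csSup_eq ⟨⟨S, hSΓ, rfl⟩, by rintro _ ⟨T, hT, rfl⟩; exact hS T hT⟩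

theorem stmt0_general (n : ℕ) (Γ : ℕ) (hΓ : Γ ≤ n) (t : Fin n → ℝ) :
    IsLeast {y : ℝ | ∃ ξ : Fin n → ℝ, (∀ i, |ξ i| ≤ 1) ∧ (∑ i, |ξ i|) ≤ (Γ : ℝ) ∧
        y = ∑ i, t i * ξ i}
      (-(sumTopAbs n t Γ)) := by
  obtain ⟨S, hSΓ, hmax⟩ :=
    exists_card_eq_sum_maximal (fun i => |t i|) (k := Γ) (by simpa using hΓ)
  rw [sumTopAbs_eq_of_sum_maximal hSΓ hmax]
  subst hSΓ
  constructor
  · obtain ⟨ξ, hξ₁, hξS, hξt⟩ := exists_sum_mul_eq_neg_sum_abs S t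
    exact ⟨ξ, hξ₁, hξS, hξt.symm⟩
  · rintro _ ⟨ξ, hξ₁, hξS, rfl⟩
    have hbound := sum_mul_le_sum_of_sum_maximal (fun i => abs_nonneg (t i)) hmax
      (fun i => abs_nonneg (ξ i)) hξ₁ hξS
    calc -∑ i ∈ S, |t i| ≤ ∑ i, -|t i * ξ i| := by
          rw [sum_neg_distrib, neg_le_neg_iff]
          simpa only [abs_mul] using hbound
      _ ≤ ∑ i, t i * ξ i := sum_le_sum fun i _ => neg_abs_le _

theorem stmt0 (n : ℕ) (hn : 1 ≤ n) (Γ : ℕ) (hΓ : Γ ≤ n) (t : Fin n → ℝ) :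
    IsLeast {y : ℝ | ∃ ξ : Fin n → ℝ, (∀ i, |ξ i| ≤ 1) ∧ (∑ i, |ξ i|) ≤ (Γ : ℝ) ∧
        y = ∑ i, t i * ξ i}
      (-(sumTopAbs n t Γ)) :=
  stmt0_general n Γ hΓ t
end

section
/- For real numbers t_1,…,t_n and an integer 0 ≤ Γ ≤ n, the sum of the Γ largest values among |t_1|,…,|t_n| equals the minimum over θ ≥ 0 of Γθ + ∑_{i=1}^n max(0, |t_i| − θ). -/
/-- The sum of the `Γ` largest `|t i|` equals the attained minimum over `θ ≥ 0`
of `Γθ + ∑ max(0, |t i| − θ)`. -/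
theorem stmt1 (n : ℕ) (hn : 1 ≤ n) (Γ : ℕ) (hΓ : Γ ≤ n) (t : Fin n → ℝ) :
    IsLeast {y : ℝ | ∃ θ : ℝ, 0 ≤ θ ∧
        y = (Γ : ℝ) * θ + ∑ i, max 0 (|t i| - θ)}
      (sumTopAbs n t Γ) := by
  set A : Set ℝ := {x : ℝ | ∃ S : Finset (Fin n), S.card = Γ ∧ x = ∑ i ∈ S, |t i|} with hA
  have hMs : sumTopAbs n t Γ = sSup A := rfl
  have hAne : A.Nonempty := by
    obtain ⟨S, _, hS⟩ := Finset.exists_subset_card_eq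
      (show Γ ≤ (Finset.univ : Finset (Fin n)).card by simpa using hΓ)
    exact ⟨_, S, hS, rfl⟩
  have hAfin : A.Finite :=
    Set.Finite.subset (Set.finite_range (fun S : Finset (Fin n) => ∑ i ∈ S, |t i|))
      (by rintro x ⟨S, _, rfl⟩; exact ⟨S, rfl⟩)
  have hbdd : BddAbove A := hAfin.bddAbove
  have hmem : sSup A ∈ A := hAne.csSup_mem hAfin
  obtain ⟨S₀, hcard, hsum⟩ := hmem
  rw [← hMs] at hsum
  have hmax : ∀ S : Finset (Fin n), S.card = Γ → ∑ i ∈ S, |t i| ≤ sumTopAbs n t Γ := by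
    intro S hS
    rw [hMs]
    exact le_csSup hbdd ⟨S, hS, rfl⟩
  constructor
  · -- membership
    rcases Nat.eq_zero_or_pos Γ with h0 | hpos
    · subst h0
      have hS₀ : S₀ = ∅ := Finset.card_eq_zero.mp hcard
      obtain ⟨i₀, _, hi₀⟩ := Finset.exists_max_image (Finset.univ : Finset (Fin n))
        (fun i => |t i|) (Finset.univ_nonempty_iff.mpr (Fin.pos_iff_nonempty.mp hn))
      refine ⟨|t i₀|, abs_nonneg _, ?_⟩
      rw [hsum, hS₀]
      simp only [Finset.sum_empty, Nat.cast_zero, zero_mul, zero_add]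
      rw [eq_comm, Finset.sum_eq_zero]
      intro i _
      exact max_eq_left (sub_nonpos.mpr (hi₀ i (Finset.mem_univ i)))
    · have hS₀ne : S₀.Nonempty := Finset.card_pos.mp (hcard ▸ hpos)
      obtain ⟨i₀, hi₀S, hi₀⟩ := Finset.exists_min_image S₀ (fun i => |t i|) hS₀ne
      refine ⟨|t i₀|, abs_nonneg _, ?_⟩
      have hout : ∀ j ∉ S₀, |t j| ≤ |t i₀| := by
        intro j hj
        have hjne : j ∉ S₀.erase i₀ := fun h => hj (Finset.mem_of_mem_erase h)
        have hcard' : (insert j (S₀.erase i₀)).card = Γ := by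
          rw [Finset.card_insert_of_notMem hjne, Finset.card_erase_of_mem hi₀S, hcard]
          omega
        have hle := hmax _ hcard'
        rw [hsum, Finset.sum_insert hjne, Finset.sum_erase_eq_sub hi₀S] at hle
        linarith
      rw [hsum, ← Finset.sum_add_sum_compl S₀ (fun i => max 0 (|t i| - |t i₀|))]
      have h1 : ∑ i ∈ S₀, max 0 (|t i| - |t i₀|) = ∑ i ∈ S₀, (|t i| - |t i₀|) :=
        Finset.sum_congr rfl fun i hi => max_eq_right (sub_nonneg.mpr (hi₀ i hi))
      have h2 : ∑ i ∈ S₀ᶜ, max 0 (|t i| - |t i₀|) = 0 :=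
        Finset.sum_eq_zero fun i hi =>
          max_eq_left (sub_nonpos.mpr (hout i (Finset.mem_compl.mp hi)))
      rw [h1, h2, Finset.sum_sub_distrib, Finset.sum_const, hcard]
      push_cast
      ring
  · -- lower bound
    rintro y ⟨θ, hθ, rfl⟩
    rw [hsum]
    have step1 : ∑ i ∈ S₀, |t i| ≤ ∑ i ∈ S₀, (θ + max 0 (|t i| - θ)) := by
      refine Finset.sum_le_sum fun i _ => ?_
      have := le_max_right 0 (|t i| - θ)
      linarith
    have step2 : ∑ i ∈ S₀, (θ + max 0 (|t i| - θ)) = Γ * θ + ∑ i ∈ S₀, max 0 (|t i| - θ) := by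
      rw [Finset.sum_add_distrib, Finset.sum_const, hcard]; push_cast; ring
    have step3 : ∑ i ∈ S₀, max 0 (|t i| - θ) ≤ ∑ i, max 0 (|t i| - θ) :=
      Finset.sum_le_sum_of_subset_of_nonneg (Finset.subset_univ S₀)
        (fun i _ _ => le_max_left 0 _)
    linarith
end

section
/- Consider the LP relaxation of the multiple-choice knapsack problem: maximize ∑_{i,j} v_{ij} z_{ij} subject to ∑_{i,j} c_{ij} z_{ij} ≤ C, ∑_j z_{ij} = 1 for each i, and z_{ij} ≥ 0. If the LP is feasible, then there exists an optimal solution in which at most one group i has more than one index j with z_{ij} > 0. -/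
/-!
Among the optimal solutions of the (compact, nonempty) feasible polytope pick one, `z`, with the
fewest positive coordinates. If two distinct groups `a`, `b` each had two positive coordinates,
shifting mass inside group `a` and inside group `b` in a suitable ratio gives a nonzero direction
`d` that keeps every group sum and the total cost unchanged and only touches positive coordinates
of `z`. Choosing the sign of `d` so that it does not decrease the value, walk from `z` along `d`
until a first coordinate drops to zero: the endpoint is again feasible and optimal, but has
strictly fewer positive coordinates.
-/

open Finset

namespace MultipleChoiceKnapsack

variable {ι κ : Type*}

section Exchange

variable [DecidableEq ι] [DecidableEq κ]

def exchange (a : ι) (j₁ j₂ : κ) : ι → κ → ℝ := Pi.single a (Pi.single j₁ 1 - Pi.single j₂ 1)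

theorem exchange_apply_of_ne {a i : ι} (h : i ≠ a) (j₁ j₂ : κ) : exchange a j₁ j₂ i = 0 :=
  Pi.single_eq_of_ne h _

theorem exchange_apply_self_left (a : ι) {j₁ j₂ : κ} (h : j₁ ≠ j₂) : exchange a j₁ j₂ a j₁ = 1 := by
  simp [exchange, h]

theorem eq_and_mem_of_exchange_apply_ne_zero {a i : ι} {j₁ j₂ j : κ}
    (h : exchange a j₁ j₂ i j ≠ 0) : i = a ∧ (j = j₁ ∨ j = j₂) := by
  rcases eq_or_ne i a with rfl | hia
  · by_contra! hj
    obtain ⟨h₁, h₂⟩ := hj rfl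
    simp [exchange, h₁, h₂] at h
  · simp [exchange_apply_of_ne hia] at h

theorem sum_exchange_apply [Fintype κ] (a : ι) (j₁ j₂ : κ) (i : ι) :
    ∑ j, exchange a j₁ j₂ i j = 0 := by
  rcases eq_or_ne i a with rfl | h
  · simp [exchange, sum_sub_distrib]
  · simp [exchange_apply_of_ne h]

end Exchange

variable [Fintype ι] [Fintype κ]

def pairing (c z : ι → κ → ℝ) : ℝ := ∑ i, ∑ j, c i j * z i j

def feasibleSet (c : ι → κ → ℝ) (C : ℝ) : Set (ι → κ → ℝ) :=
  {z | (∀ i j, 0 ≤ z i j) ∧ (∀ i, ∑ j, z i j = 1) ∧ pairing c z ≤ C}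

noncomputable def posSupport (z : ι → κ → ℝ) : Finset (ι × κ) := {p | 0 < z p.1 p.2}

theorem pairing_add (c z w : ι → κ → ℝ) : pairing c (z + w) = pairing c z + pairing c w := by
  simp only [pairing, Pi.add_apply, mul_add, sum_add_distrib]

theorem pairing_sub (c z w : ι → κ → ℝ) : pairing c (z - w) = pairing c z - pairing c w := by
  simp only [pairing, Pi.sub_apply, mul_sub, sum_sub_distrib]

theorem pairing_smul (c z : ι → κ → ℝ) (t : ℝ) : pairing c (t • z) = t * pairing c z := by
  simp only [pairing, Pi.smul_apply, smul_eq_mul, mul_sum, mul_left_comm t]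

theorem continuous_pairing (c : ι → κ → ℝ) : Continuous (pairing c) := by
  unfold pairing; fun_prop

theorem isCompact_feasibleSet (c : ι → κ → ℝ) (C : ℝ) : IsCompact (feasibleSet c C) := by
  have hclosed : IsClosed (feasibleSet c C) := by
    simp only [feasibleSet, Set.ofPred_and, Set.ofPred_forall]
    refine (isClosed_iInter fun i => isClosed_iInter fun j => isClosed_le ?_ ?_).inter
      ((isClosed_iInter fun i => isClosed_eq ?_ ?_).inter
        (isClosed_le (continuous_pairing c) continuous_const)) <;> fun_prop
  refine (isCompact_univ_pi fun _ => isCompact_univ_pi fun _ => isCompact_Icc (a := (0 : ℝ))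
    (b := 1)).of_isClosed_subset hclosed fun z ⟨hz, hsum, _⟩ => ?_
  simp only [Set.mem_pi, Set.mem_univ, Set.mem_Icc, forall_const]
  exact fun i j => ⟨hz i j, hsum i ▸ single_le_sum (fun j' _ => hz i j') (mem_univ j)⟩

theorem add_smul_mem_feasibleSet {c z d : ι → κ → ℝ} {C t : ℝ} (hz : z ∈ feasibleSet c C)
    (hrow : ∀ i, ∑ j, d i j = 0) (hcost : pairing c d = 0) (hnonneg : ∀ i j, 0 ≤ (z + t • d) i j) :
    z + t • d ∈ feasibleSet c C := by
  obtain ⟨-, hsum, hC⟩ := hz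
  refine ⟨hnonneg, fun i => ?_, by rwa [pairing_add, pairing_smul, hcost, mul_zero, add_zero]⟩
  simp only [Pi.add_apply, Pi.smul_apply, smul_eq_mul, sum_add_distrib, ← mul_sum, hsum, hrow,
    mul_zero, add_zero]

/-- The ratio test of the simplex method. -/
theorem exists_add_smul_nonneg_posSupport_ssubset {z d : ι → κ → ℝ} (hz : ∀ i j, 0 ≤ z i j)
    (hd : ∀ i j, d i j ≠ 0 → 0 < z i j) (hneg : ∃ i j, d i j < 0) :
    ∃ t : ℝ, 0 < t ∧ (∀ i j, 0 ≤ (z + t • d) i j) ∧ posSupport (z + t • d) ⊂ posSupport z := by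
  obtain ⟨i₀, j₀, hneg₀⟩ := hneg
  obtain ⟨p, hp, hmin⟩ := (univ.filter fun p : ι × κ => d p.1 p.2 < 0).exists_min_image
    (fun p => z p.1 p.2 / -d p.1 p.2) ⟨(i₀, j₀), by simpa using hneg₀⟩
  simp only [mem_filter, mem_univ, true_and, Prod.forall] at hp hmin
  have hzero : z p.1 p.2 + z p.1 p.2 / -d p.1 p.2 * d p.1 p.2 = 0 := by
    field_simp [hp.ne]; ring
  refine ⟨z p.1 p.2 / -d p.1 p.2, div_pos (hd _ _ hp.ne) (neg_pos.mpr hp), fun i j => ?_, ?_⟩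
  · simp only [Pi.add_apply, Pi.smul_apply, smul_eq_mul]
    rcases le_or_gt 0 (d i j) with h | h
    · have := div_nonneg (hz p.1 p.2) (neg_nonneg.mpr hp.le)
      nlinarith [hz i j]
    · have := (le_div_iff₀ (neg_pos.mpr h)).mp (hmin i j h)
      linarith
  · refine ssubset_of_subset_of_ne (fun q hq => ?_) fun h => ?_
    · simp only [posSupport, mem_filter, mem_univ, true_and, Pi.add_apply, Pi.smul_apply,
        smul_eq_mul] at hq ⊢
      by_cases hq0 : d q.1 q.2 = 0
      · simpa [hq0] using hq
      · exact hd _ _ hq0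
    · have hp_mem : p ∈ posSupport z := by simpa [posSupport] using hd _ _ hp.ne
      rw [← h] at hp_mem
      simp [posSupport, hzero] at hp_mem

theorem exists_neg_of_sum_eq_zero {d : ι → κ → ℝ} (hrow : ∀ i, ∑ j, d i j = 0) (hd : d ≠ 0) :
    ∃ i j, d i j < 0 := by
  by_contra! hnonneg
  exact hd <| funext fun i => funext fun j =>
    (sum_eq_zero_iff_of_nonneg fun j _ => hnonneg i j).mp (hrow i) j (mem_univ j)

section CostNeutral

variable [DecidableEq ι] [DecidableEq κ]

theorem pairing_exchange (c : ι → κ → ℝ) (a : ι) (j₁ j₂ : κ) :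
    pairing c (exchange a j₁ j₂) = c a j₁ - c a j₂ := by
  simp [pairing, exchange, Pi.single_apply, ite_apply, mul_ite, mul_sub, sum_sub_distrib]

theorem exists_costNeutral_exchange (c : ι → κ → ℝ) {a b : ι} (hab : a ≠ b) {j₁ j₂ k₁ k₂ : κ}
    (hj : j₁ ≠ j₂) (hk : k₁ ≠ k₂) :
    ∃ d : ι → κ → ℝ, d ≠ 0 ∧ (∀ i, ∑ j, d i j = 0) ∧ pairing c d = 0 ∧
      ∀ i j, d i j ≠ 0 → (i = a ∧ (j = j₁ ∨ j = j₂)) ∨ (i = b ∧ (j = k₁ ∨ j = k₂)) := by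
  by_cases hc : c a j₁ = c a j₂
  · refine ⟨exchange a j₁ j₂, fun h => ?_, sum_exchange_apply a j₁ j₂, ?_,
      fun i j h => .inl (eq_and_mem_of_exchange_apply_ne_zero h)⟩
    · simpa [h] using exchange_apply_self_left a hj
    · rw [pairing_exchange, hc, sub_self]
  refine ⟨(c b k₁ - c b k₂) • exchange a j₁ j₂ - (c a j₁ - c a j₂) • exchange b k₁ k₂,
    fun h => ?_, fun i => ?_, ?_, fun i j h => ?_⟩
  · refine hc ?_
    simpa [exchange_apply_of_ne hab.symm, exchange_apply_self_left b hk, sub_eq_zero, eq_comm]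
      using congrFun (congrFun h b) k₁
  · simp [sum_sub_distrib, ← mul_sum, sum_exchange_apply]
  · rw [pairing_sub, pairing_smul, pairing_smul, pairing_exchange, pairing_exchange]
    ring
  · by_cases ha : exchange a j₁ j₂ i j = 0
    · refine .inr (eq_and_mem_of_exchange_apply_ne_zero fun hb => h ?_)
      simp [ha, hb]
    · exact .inl (eq_and_mem_of_exchange_apply_ne_zero ha)

end CostNeutral

theorem fractionalGroups_subsingleton_of_minimalFor {v c z : ι → κ → ℝ} {C : ℝ}
    (hz : MinimalFor (fun w => w ∈ feasibleSet c C ∧ IsMaxOn (pairing v) (feasibleSet c C) w)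
      (fun w => #(posSupport w)) z) :
    {i | {j | 0 < z i j}.Nontrivial}.Subsingleton := by
  classical
  obtain ⟨⟨hzS, hzmax⟩, hzmin⟩ := hz
  intro a ⟨j₁, hj₁, j₂, hj₂, hj⟩ b ⟨k₁, hk₁, k₂, hk₂, hk⟩
  by_contra hab
  obtain ⟨d₀, hd₀, hrow₀, hcost₀, hsupp₀⟩ := exists_costNeutral_exchange c hab hj hk
  obtain ⟨σ, hσ, hval⟩ : ∃ σ : ℝ, σ ≠ 0 ∧ 0 ≤ σ * pairing v d₀ := by
    rcases le_total 0 (pairing v d₀) with h | h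
    · exact ⟨1, one_ne_zero, by linarith⟩
    · exact ⟨-1, by norm_num, by linarith⟩
  set d := σ • d₀
  have hrow : ∀ i, ∑ j, d i j = 0 := fun i => by
    simp only [d, Pi.smul_apply, smul_eq_mul, ← mul_sum, hrow₀, mul_zero]
  have hsupp : ∀ i j, d i j ≠ 0 → 0 < z i j := fun i j h => by
    rcases hsupp₀ i j (right_ne_zero_of_mul h) with ⟨rfl, rfl | rfl⟩ | ⟨rfl, rfl | rfl⟩ <;>
      assumption
  obtain ⟨t, ht, hnonneg, hssub⟩ := exists_add_smul_nonneg_posSupport_ssubset hzS.1 hsupp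
    (exists_neg_of_sum_eq_zero hrow (smul_ne_zero hσ hd₀))
  have hwS : z + t • d ∈ feasibleSet c C :=
    add_smul_mem_feasibleSet hzS hrow (by rw [pairing_smul, hcost₀, mul_zero]) hnonneg
  have hwmax : IsMaxOn (pairing v) (feasibleSet c C) (z + t • d) := fun x hx => by
    have : pairing v z ≤ pairing v (z + t • d) := by
      rw [pairing_add, pairing_smul, pairing_smul]
      nlinarith
    exact (hzmax hx).trans this
  have hcard := card_lt_card hssub
  exact hcard.not_ge (hzmin ⟨hwS, hwmax⟩ hcard.le)

end MultipleChoiceKnapsack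

/-- MCKP LP relaxation: if feasible, there is an optimal solution in which at
most one group has more than one positive variable. -/
theorem stmt9 (n m : ℕ) (v c : Fin n → Fin m → ℝ) (C : ℝ)
    (hfeas : ∃ z : Fin n → Fin m → ℝ,
      (∀ i j, 0 ≤ z i j) ∧ (∀ i, (∑ j, z i j) = 1) ∧
      (∑ i, ∑ j, c i j * z i j) ≤ C) :
    ∃ z : Fin n → Fin m → ℝ,
      (∀ i j, 0 ≤ z i j) ∧ (∀ i, (∑ j, z i j) = 1) ∧
      (∑ i, ∑ j, c i j * z i j) ≤ C ∧
      (∀ z' : Fin n → Fin m → ℝ,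
        (∀ i j, 0 ≤ z' i j) → (∀ i, (∑ j, z' i j) = 1) →
        (∑ i, ∑ j, c i j * z' i j) ≤ C →
        (∑ i, ∑ j, v i j * z' i j) ≤ ∑ i, ∑ j, v i j * z i j) ∧
      ({i : Fin n | ({j : Fin m | 0 < z i j} : Set (Fin m)).Subsingleton → False} :
        Set (Fin n)).Subsingleton := by
  open MultipleChoiceKnapsack in
  obtain ⟨z₀, hz₀S, hz₀max⟩ :=
    (isCompact_feasibleSet c C).exists_isMaxOn hfeas (continuous_pairing v).continuousOn
  obtain ⟨z, hz⟩ := exists_minimalFor_of_wellFoundedLT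
    (fun w => w ∈ feasibleSet c C ∧ IsMaxOn (pairing v) (feasibleSet c C) w)
    (fun w => #(posSupport w)) ⟨z₀, hz₀S, hz₀max⟩
  obtain ⟨⟨hz0, hsum, hC⟩, hzmax⟩ := hz.prop
  refine ⟨z, hz0, hsum, hC, fun z' h0 h1 h2 => hzmax ⟨h0, h1, h2⟩, ?_⟩
  simpa only [← Set.not_subsingleton_iff] using fractionalGroups_subsingleton_of_minimalFor hz
end

section
/- For the multiple-choice knapsack problem, the optimal value of its LP relaxation minus the optimal value of the integer problem is at most ΔV_max, where ΔV_max is the maximum, over all groups i and all pairs of adjacent upper-hull vertices of that group's cost–value point set, of the value difference between the adjacent vertices (taken as 0 for groups whose hull has a single vertex). -/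
/-!
Round the LP optimum down: in the one mixed group replace the mixture of the adjacent hull
vertices by the cheaper vertex `jk`. Its cost is at most that of the mixture, so the selection
stays within budget, and the value lost, `α (v jk1 - v jk)`, is at most the jump `v jk1 - v jk ≤ ΔV`.
-/

open Finset Function

theorem Finset.sum_apply_update_eq_sum_erase_add {ι κ M : Type*} [Fintype ι] [DecidableEq ι]
    [AddCommMonoid M] (f : ι → κ → M) (g : ι → κ) (a : ι) (b : κ) :
    ∑ i, f i (update g a b i) = ∑ i ∈ univ.erase a, f i (g i) + f a b := by
  rw [← add_sum_erase _ _ (mem_univ a), update_self, add_comm]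
  exact congrArg (· + f a b) <| sum_congr rfl fun i hi => by rw [update_of_ne (ne_of_mem_erase hi)]

theorem le_one_sub_mul_add_mul {x y α : ℝ} (hxy : x ≤ y) (hα : 0 ≤ α) :
    x ≤ (1 - α) * x + α * y := by
  nlinarith

theorem one_sub_mul_add_mul_le {x y α : ℝ} (hxy : x ≤ y) (hα : α ≤ 1) :
    (1 - α) * x + α * y ≤ y := by
  nlinarith

theorem stmt10_general (n m : ℕ)
    (v c : Fin n → Fin m → ℝ) (C : ℝ)
    (OPT_LP OPT_IP : ℝ)
    -- OPT_IP is the greatest value of an integer-feasible selection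
    (hIP : IsGreatest {y : ℝ | ∃ jsel : Fin n → Fin m,
      (∑ i, c i (jsel i)) ≤ C ∧ y = ∑ i, v i (jsel i)} OPT_IP)
    (ΔV : ℝ)
    -- structural hypothesis (established separately): an optimal LP solution
    -- selects a single option in every group except possibly one group i⋆,
    -- which mixes two adjacent upper-hull vertices — menu points
    -- (ck, vk), (ck1, vk1) with ck ≤ ck1 and value jump vk1 − vk ≤ ΔV.
    (hmix : ∃ (istar : Fin n) (jsel : Fin n → Fin m) (jk jk1 : Fin m) (α : ℝ),
      α ∈ Set.Icc (0 : ℝ) 1 ∧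
      c istar jk ≤ c istar jk1 ∧ v istar jk ≤ v istar jk1 ∧
      v istar jk1 - v istar jk ≤ ΔV ∧
      (∑ i ∈ Finset.univ.erase istar, c i (jsel i))
        + ((1 - α) * c istar jk + α * c istar jk1) ≤ C ∧
      (∑ i ∈ Finset.univ.erase istar, v i (jsel i))
        + ((1 - α) * v istar jk + α * v istar jk1) = OPT_LP) :
    OPT_LP - OPT_IP ≤ ΔV := by
  obtain ⟨istar, jsel, jk, jk1, α, ⟨hα0, hα1⟩, hc, hv, hjump, hcost, hval⟩ := hmix
  have hfeasible : ∑ i, c i (update jsel istar jk i) ≤ C := by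
    rw [sum_apply_update_eq_sum_erase_add]
    linarith [le_one_sub_mul_add_mul hc hα0]
  have hrounded : ∑ i, v i (update jsel istar jk i) ≤ OPT_IP := hIP.2 ⟨_, hfeasible, rfl⟩
  rw [sum_apply_update_eq_sum_erase_add] at hrounded
  linarith [one_sub_mul_add_mul_le hv hα1]

/-- Additive integrality-gap bound for MCKP: the LP optimum exceeds the integer
optimum by at most the maximal adjacent value jump `ΔV` on the groups'
upper hulls, given that some optimal LP solution mixes at most one group
between two adjacent hull vertices (both of which are menu points). -/
theorem stmt10 (n m : ℕ) (hn : 1 ≤ n) (hm : 1 ≤ m)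
    (v c : Fin n → Fin m → ℝ) (C : ℝ)
    (hc : ∀ i j, 0 ≤ c i j)
    (OPT_LP OPT_IP : ℝ)
    -- OPT_IP is the greatest value of an integer-feasible selection
    (hIP : IsGreatest {y : ℝ | ∃ jsel : Fin n → Fin m,
      (∑ i, c i (jsel i)) ≤ C ∧ y = ∑ i, v i (jsel i)} OPT_IP)
    -- OPT_LP is the greatest value of an LP-feasible solution
    (hLP : IsGreatest {y : ℝ | ∃ z : Fin n → Fin m → ℝ,
      (∀ i j, 0 ≤ z i j) ∧ (∀ i, (∑ j, z i j) = 1) ∧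
      (∑ i, ∑ j, c i j * z i j) ≤ C ∧ y = ∑ i, ∑ j, v i j * z i j} OPT_LP)
    (ΔV : ℝ) (hΔV : 0 ≤ ΔV)
    -- structural hypothesis (established separately): an optimal LP solution
    -- selects a single option in every group except possibly one group i⋆,
    -- which mixes two adjacent upper-hull vertices — menu points
    -- (ck, vk), (ck1, vk1) with ck ≤ ck1 and value jump vk1 − vk ≤ ΔV.
    (hmix : ∃ (istar : Fin n) (jsel : Fin n → Fin m) (jk jk1 : Fin m) (α : ℝ),
      α ∈ Set.Icc (0 : ℝ) 1 ∧
      c istar jk ≤ c istar jk1 ∧ v istar jk ≤ v istar jk1 ∧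
      v istar jk1 - v istar jk ≤ ΔV ∧
      (∑ i ∈ Finset.univ.erase istar, c i (jsel i))
        + ((1 - α) * c istar jk + α * c istar jk1) ≤ C ∧
      (∑ i ∈ Finset.univ.erase istar, v i (jsel i))
        + ((1 - α) * v istar jk + α * v istar jk1) = OPT_LP) :
    OPT_LP - OPT_IP ≤ ΔV :=
  stmt10_general n m v c C OPT_LP OPT_IP hIP ΔV hmix
end

section
/- Fix θ ≥ 0 and real numbers s_i, t_i, and a real Γ ≥ 0. Define s^θ_i := s_i − max(0, |t_i| − θ). Then the inequality ∑_{i=1}^n s^θ_i ≥ Γθ implies the robust inequality ∑_i s_i − β(Γ) ≥ 0 whenever Γ is a nonnegative integer ≤ n and β(Γ) is the sum of the Γ largest |t_i|. -/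
/-- If `∑ (s i − max(0,|t i|−θ)) ≥ Γθ` for some `θ ≥ 0`, then the robust
inequality `∑ s i − β(Γ) ≥ 0` holds. -/
theorem stmt13 (n : ℕ) (hn : 1 ≤ n) (Γ : ℕ) (hΓ : Γ ≤ n)
    (s t : Fin n → ℝ) (θ : ℝ) (hθ : 0 ≤ θ)
    (h : (Γ : ℝ) * θ ≤ ∑ i, (s i - max 0 (|t i| - θ))) :
    0 ≤ (∑ i, s i) - sumTopAbs n t Γ := by
  rw [sub_nonneg, sumTopAbs]
  obtain ⟨S₀, -, hS₀⟩ := Finset.exists_subset_card_eq (show Γ ≤ (Finset.univ : Finset (Fin n)).card by simpa using hΓ)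
  refine csSup_le ⟨∑ i ∈ S₀, |t i|, S₀, hS₀, rfl⟩ ?_
  rintro x ⟨S, hS, rfl⟩
  have key : ∀ i ∈ S, |t i| ≤ max 0 (|t i| - θ) + θ := by
    intro i _
    rcases le_total (|t i| - θ) 0 with hle | hle
    · simp [max_eq_left hle]; linarith
    · simp [max_eq_right hle]
  calc ∑ i ∈ S, |t i| ≤ ∑ i ∈ S, (max 0 (|t i| - θ) + θ) := Finset.sum_le_sum key
    _ = (∑ i ∈ S, max 0 (|t i| - θ)) + Γ * θ := by
        rw [Finset.sum_add_distrib, Finset.sum_const, hS]; ring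
    _ ≤ (∑ i, max 0 (|t i| - θ)) + Γ * θ := by
        have := Finset.sum_le_sum_of_subset_of_nonneg (Finset.subset_univ S)
          (fun i _ _ => le_max_left 0 (|t i| - θ))
        linarith
    _ ≤ ∑ i, s i := by
        rw [Finset.sum_sub_distrib] at h; linarith
end
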